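/- arXiv:0909.4717 — 6 statements merged into one kernel-verified Lean document; each statement's English description precedes it below -/
import Mathlib

section
/- If a simple graph G on vertex set [n] is closed with respect to the labeling (i.e., for all edges {i,j} and {k,l} with i<j and k<l, one has {j,l} ∈ E(G) whenever i=k, and {i,k} ∈ E(G) whenever j=l), then G is chordal, i.e., every cycle of length greater than 3 has a chord. -/
/-! The smallest vertex `m` of a cycle has both of its cycle neighbours above it, so closedness
makes them adjacent; on a cycle of length greater than `3` the two neighbours of `m` are not
consecutive, so this edge is a chord. -/

/-- A simple graph on `[n]` (here `Fin n`) is *closed with respect to the given labeling*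
if for all edges `{i,j}` and `{k,l}` with `i < j` and `k < l`:
if `i = k` then `{j,l}` is an edge, and if `j = l` then `{i,k}` is an edge. -/
def SimpleGraph.IsClosed {n : ℕ} (G : SimpleGraph (Fin n)) : Prop :=
  ∀ ⦃i j k l : Fin n⦄, G.Adj i j → G.Adj k l → i < j → k < l →
    (i = k → j ≠ l → G.Adj j l) ∧ (j = l → i ≠ k → G.Adj i k)

namespace SimpleGraph

theorem IsClosed.adj_of_lt_of_lt {n : ℕ} {G : SimpleGraph (Fin n)} (hG : G.IsClosed)
    {m a b : Fin n} (ha : G.Adj m a) (hb : G.Adj m b) (hma : m < a) (hmb : m < b)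
    (hab : a ≠ b) : G.Adj a b :=
  (hG ha hb hma hmb).1 rfl hab

namespace Walk

variable {V : Type*} {G : SimpleGraph V} {u : V}

theorem IsCycle.mk_snd_penultimate_notMem_edges {c : G.Walk u u} (hc : c.IsCycle)
    (hlen : 3 < c.length) : s(c.snd, c.penultimate) ∉ c.edges := by
  have hnil := hc.not_nil
  have hedges := congrArg edges (c.cons_tail_eq hnil)
  rw [edges_cons] at hedges
  rw [← hedges, List.mem_cons, Sym2.eq_iff]
  rintro ((⟨hu, -⟩ | ⟨-, hpen⟩) | htail)
  · exact (c.adj_snd hnil).ne' hu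
  · exact (c.adj_penultimate hnil).ne hpen
  · -- `c.tail` is a path from `c.snd`, so its only edge at `c.snd` leads to `c.getVert 2`.
    have h2 : c.getVert 2 = c.getVert (c.length - 1) := by
      simpa [snd, penultimate] using (hc.isPath_tail.eq_snd_of_mem_edges htail).symm
    have := hc.getVert_injOn ⟨by omega, by omega⟩ ⟨by omega, by omega⟩ h2
    omega

end Walk

end SimpleGraph

/-- If `G` is closed with respect to the labeling, then `G` is chordal: every cycle of
length greater than `3` has a chord, i.e. an edge of `G` joining two vertices of the
cycle which is not an edge of the cycle. -/
theorem closed_implies_chordal {n : ℕ} (G : SimpleGraph (Fin n)) (hG : G.IsClosed) :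
    ∀ (v : Fin n) (c : G.Walk v v), c.IsCycle → 3 < c.length →
      ∃ u w : Fin n, u ∈ c.support ∧ w ∈ c.support ∧ G.Adj u w ∧ s(u, w) ∉ c.edges := by
  intro v c hc hlen
  obtain ⟨m, hm, hmin⟩ := c.support.toFinset.exists_min_image id ⟨v, by simp⟩
  rw [List.mem_toFinset] at hm
  set d := c.rotate m hm
  have hd : d.IsCycle := hc.rotate hm
  have hdnil : ¬ d.Nil := hd.not_nil
  have hmem (i : ℕ) : d.getVert i ∈ c.support :=
    (c.mem_support_rotate_iff m hm).mp (d.getVert_mem_support i)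
  have hsnd : m < d.snd :=
    (hmin _ (List.mem_toFinset.mpr (hmem 1))).lt_of_ne (d.adj_snd hdnil).ne
  have hpen : m < d.penultimate :=
    (hmin _ (List.mem_toFinset.mpr (hmem _))).lt_of_ne (d.adj_penultimate hdnil).ne'
  refine ⟨d.snd, d.penultimate, hmem 1, hmem _,
    hG.adj_of_lt_of_lt (d.adj_snd hdnil) (d.adj_penultimate hdnil).symm hsnd hpen
      hd.snd_ne_penultimate, fun h => ?_⟩
  exact hd.mk_snd_penultimate_notMem_edges (by simpa [d] using hlen)
    ((c.rotate_edges m hm).perm.mem_iff.mpr h)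
end

section
/- If a simple graph G on vertex set [n] is closed with respect to the labeling, then G is claw-free: G has no induced subgraph consisting of three distinct edges e1, e2, e3 with e1 ∩ e2 ∩ e3 ≠ ∅. -/
lemma same_side_adj {n : ℕ} {G : SimpleGraph (Fin n)} (hG : G.IsClosed)
    {i x y : Fin n} (hxy : x ≠ y) (hx : G.Adj i x) (hy : G.Adj i y)
    (h : (i < x ∧ i < y) ∨ (x < i ∧ y < i)) : G.Adj x y := by
  rcases h with ⟨h1, h2⟩ | ⟨h1, h2⟩
  · exact (hG hx hy h1 h2).1 rfl hxy
  · exact (hG hx.symm hy.symm h1 h2).2 rfl hxy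

/-- If `G` is closed with respect to the labeling, then `G` is claw-free: there is no
vertex `i` adjacent to three distinct vertices `a`, `b`, `c` which are pairwise
nonadjacent (i.e. no induced subgraph on four vertices consisting of exactly the three
edges `{i,a}`, `{i,b}`, `{i,c}`). -/
theorem closed_implies_clawfree {n : ℕ} (G : SimpleGraph (Fin n)) (hG : G.IsClosed) :
    ∀ i a b c : Fin n, a ≠ b → a ≠ c → b ≠ c →
      G.Adj i a → G.Adj i b → G.Adj i c →
      (G.Adj a b ∨ G.Adj a c ∨ G.Adj b c) := by
  intro i a b c hab hac hbc hia hib hic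
  rcases lt_or_gt_of_ne hia.ne with ha | ha <;>
  rcases lt_or_gt_of_ne hib.ne with hb | hb <;>
  rcases lt_or_gt_of_ne hic.ne with hc | hc
  · exact Or.inl (same_side_adj hG hab hia hib (Or.inl ⟨ha, hb⟩))
  · exact Or.inl (same_side_adj hG hab hia hib (Or.inl ⟨ha, hb⟩))
  · exact Or.inr (Or.inl (same_side_adj hG hac hia hic (Or.inl ⟨ha, hc⟩)))
  · exact Or.inr (Or.inr (same_side_adj hG hbc hib hic (Or.inr ⟨hb, hc⟩)))
  · exact Or.inr (Or.inr (same_side_adj hG hbc hib hic (Or.inl ⟨hb, hc⟩)))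
  · exact Or.inr (Or.inl (same_side_adj hG hac hia hic (Or.inr ⟨ha, hc⟩)))
  · exact Or.inl (same_side_adj hG hab hia hib (Or.inr ⟨ha, hb⟩))
  · exact Or.inl (same_side_adj hG hab hia hib (Or.inr ⟨ha, hb⟩))
end

section
/- A connected bipartite graph is closed (i.e., admits a labeling of its vertices by 1,...,n making it closed with respect to that labeling) if and only if it is a path graph. -/
namespace SimpleGraph

section LinearOrder

variable {V : Type*} [LinearOrder V] (H : SimpleGraph V)

def UniqueLowerAdj : Prop :=
  ∀ ⦃i j k : V⦄, H.Adj i k → H.Adj j k → i < k → j < k → i = j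

def UniqueUpperAdj : Prop :=
  ∀ ⦃i j k : V⦄, H.Adj i j → H.Adj i k → i < j → i < k → j = k

variable {H}

theorem Connected.eq_of_forall_not_adj_lt (hconn : H.Connected) (hlow : H.UniqueLowerAdj)
    {a b : V} (ha : ∀ i < a, ¬H.Adj i a) (hb : ∀ i < b, ¬H.Adj i b) : a = b := by
  let descends := Relation.ReflTransGen fun v u => H.Adj v u ∧ u < v
  -- `P v`: every local minimum reached from `v` by stepping down is `a`
  let P v := ∀ u, descends v u → (∀ i < u, ¬H.Adj i u) → u = a
  have hPa : P a := fun u hu _ => by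
    rcases hu.cases_head with rfl | ⟨c, hac, -⟩
    · rfl
    · exact absurd hac.1.symm (ha c hac.2)
  have hstep : ∀ x y, H.Adj x y → P x → P y := by
    intro x y hxy hx u hu hu_min
    rcases hxy.ne.lt_or_gt with hlt | hgt
    · rcases hu.cases_head with rfl | ⟨c, hyc, hcu⟩
      · exact absurd hxy (hu_min x hlt)
      · exact hx u (hlow hyc.1.symm hxy hyc.2 hlt ▸ hcu) hu_min
    · exact hx u (hu.head ⟨hxy, hgt⟩) hu_min
  have hPb : P b := by
    clear hb
    induction (reachable_iff_reflTransGen a b).1 (hconn a b) with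
    | refl => exact hPa
    | tail _ hyz ih => exact hstep _ _ hyz ih
  exact (hPb b .refl hb).symm

end LinearOrder

section Fin

variable {n : ℕ} {H : SimpleGraph (Fin n)}

theorem exists_adj_lt_of_pos (hconn : H.Connected) (hlow : H.UniqueLowerAdj) {j : Fin n}
    (hj : 0 < j.val) : ∃ i < j, H.Adj i j := by
  by_contra! h
  have h0 : (⟨0, j.pos⟩ : Fin n) = j :=
    hconn.eq_of_forall_not_adj_lt hlow (fun i hi => absurd (Fin.lt_def.1 hi) (Nat.not_lt_zero _)) h
  exact hj.ne (congrArg Fin.val h0)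

theorem adj_of_val_add_one_eq (hconn : H.Connected) (hlow : H.UniqueLowerAdj)
    (hup : H.UniqueUpperAdj) {i j : Fin n} (hij : i.val + 1 = j.val) : H.Adj i j := by
  induction j using WellFoundedLT.induction generalizing i with
  | _ j ih =>
    obtain ⟨a, haj, ha⟩ := exists_adj_lt_of_pos hconn hlow (j := j) (by omega)
    rcases (Nat.succ_le_of_lt (Fin.lt_def.1 haj)).eq_or_lt with heq | hlt
    · exact Fin.ext (by omega : a.val = i.val) ▸ ha
    · -- otherwise `a` has the two upper neighbours `a + 1` and `j`
      let a' : Fin n := ⟨a.val + 1, by omega⟩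
      have h : H.Adj a a' := ih a' (Fin.lt_def.2 hlt) rfl
      have := congrArg Fin.val (hup h ha (Fin.lt_def.2 (Nat.lt_succ_self _)) haj)
      simp only [a'] at this
      omega

theorem eq_pathGraph_of_uniqueAdj (hconn : H.Connected) (hlow : H.UniqueLowerAdj)
    (hup : H.UniqueUpperAdj) : H = pathGraph n := by
  have adj_succ_of_lt : ∀ {a b : Fin n}, a < b → H.Adj a b → a.val + 1 = b.val := by
    intro a b hab h
    let b' : Fin n := ⟨b.val - 1, by omega⟩
    have hb' : H.Adj b' b := adj_of_val_add_one_eq hconn hlow hup (by simp only [b']; omega)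
    have := congrArg Fin.val (hlow h hb' hab (Fin.lt_def.2 (by simp only [b']; omega)))
    simp only [b'] at this
    omega
  ext a b
  rw [pathGraph_adj]
  refine ⟨fun h => ?_, ?_⟩
  · rcases h.ne.lt_or_gt with hab | hba
    · exact .inl (adj_succ_of_lt hab h)
    · exact .inr (adj_succ_of_lt hba h.symm)
  · rintro (h | h)
    · exact adj_of_val_add_one_eq hconn hlow hup h
    · exact (adj_of_val_add_one_eq hconn hlow hup h).symm

theorem IsClosed.uniqueUpperAdj (hcl : H.IsClosed) (h3 : H.CliqueFree 3) : H.UniqueUpperAdj := by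
  intro i j k hij hik hj hk
  by_contra hne
  exact h3 {i, j, k} (is3Clique_triple_iff.2 ⟨hij, hik, (hcl hij hik hj hk).1 rfl hne⟩)

theorem IsClosed.uniqueLowerAdj (hcl : H.IsClosed) (h3 : H.CliqueFree 3) : H.UniqueLowerAdj := by
  intro i j k hik hjk hi hj
  by_contra hne
  exact h3 {i, j, k} (is3Clique_triple_iff.2 ⟨(hcl hik hjk hi hj).2 rfl hne, hik, hjk⟩)

theorem pathGraph_isClosed (n : ℕ) : (pathGraph n).IsClosed := by
  intro i j k l hij hkl hi hk
  rw [pathGraph_adj, Fin.lt_def] at *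
  refine ⟨fun hik hjl => absurd (Fin.ext ?_) hjl, fun hjl hik => absurd (Fin.ext ?_) hik⟩
  · have := congrArg Fin.val hik; omega
  · have := congrArg Fin.val hjl; omega

end Fin

theorem Iso.map_toEquiv_eq {V W : Type*} {G : SimpleGraph V} {G' : SimpleGraph W} (e : G ≃g G') :
    G.map e.toEquiv.toEmbedding = G' := by
  rw [← comap_symm]
  ext u v
  exact e.symm.map_adj_iff

end SimpleGraph

open SimpleGraph in
/-- A connected bipartite graph is closed (i.e. some relabeling of its vertices is
closed with respect to the labeling) if and only if it is a path graph. -/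
theorem closed_bipartite_iff_path {n : ℕ} (G : SimpleGraph (Fin n))
    (hconn : G.Connected) (hbip : G.Colorable 2) :
    (∃ φ : Fin n ≃ Fin n, (G.map φ.toEmbedding).IsClosed) ↔
      Nonempty (G ≃g SimpleGraph.pathGraph n) := by
  constructor
  · rintro ⟨φ, hcl⟩
    let e := Iso.map φ G
    have h3 : (G.map φ.toEmbedding).CliqueFree 3 :=
      (hbip.of_hom e.symm.toHom).cliqueFree (by norm_num)
    have hpath := eq_pathGraph_of_uniqueAdj (e.connected_iff.1 hconn)
      (hcl.uniqueLowerAdj h3) (hcl.uniqueUpperAdj h3)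
    exact ⟨hpath ▸ e⟩
  · rintro ⟨e⟩
    refine ⟨e.toEquiv, ?_⟩
    rw [e.map_toEquiv_eq]
    exact pathGraph_isClosed n
end

section
/- A simple graph G on [n] is closed with respect to the given labeling if and only if for any two distinct vertices i, j, every path of shortest length from i to j in G is directed in the associated orientation G* (where each edge {a,b} with a<b is oriented from a to b); here a path v0,v1,...,vl is directed if either v_k < v_{k+1} for all k or v_k > v_{k+1} for all k. -/
/-- A walk is *directed* (in the orientation `G*` where each edge `{a,b}` with `a < b`
is oriented from `a` to `b`) if its vertices are strictly increasing or strictly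
decreasing along the walk. -/
def SimpleGraph.Walk.IsDirected {n : ℕ} {G : SimpleGraph (Fin n)} {i j : Fin n}
    (p : G.Walk i j) : Prop :=
  List.Chain' (· < ·) p.support ∨ List.Chain' (· > ·) p.support

/-!
A shortest walk `u - v - x - ⋯` has no shortcut: `u ≠ x` and `u, x` are not adjacent. Closedness
says exactly that every such two-edge walk without shortcut is monotone (`u < v ↔ v < x`), and
a walk is directed iff all its two-edge subwalks are monotone. Conversely, a two-edge walk without
shortcut is itself a shortest path, so directedness of shortest paths gives back closedness.
-/

namespace SimpleGraph

namespace Walk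

variable {V : Type*} {G : SimpleGraph V}

def IsShortest {u v : V} (p : G.Walk u v) : Prop :=
  ∀ q : G.Walk u v, p.length ≤ q.length

theorem IsShortest.of_cons {u v w : V} {h : G.Adj u v} {p : G.Walk v w}
    (hp : (cons h p).IsShortest) : p.IsShortest :=
  fun q => by simpa using hp (cons h q)

theorem IsShortest.ne_of_cons_cons {u v x w : V} {h : G.Adj u v} {h' : G.Adj v x}
    {p : G.Walk x w} (hp : (cons h (cons h' p)).IsShortest) : u ≠ x := by
  rintro rfl
  simpa using hp p

theorem IsShortest.not_adj_of_cons_cons {u v x w : V} {h : G.Adj u v} {h' : G.Adj v x}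
    {p : G.Walk x w} (hp : (cons h (cons h' p)).IsShortest) : ¬G.Adj u x :=
  fun hux => by simpa using hp (cons hux p)

theorem isShortest_cons_cons_nil {u v w : V} (h : G.Adj u v) (h' : G.Adj v w) (hne : u ≠ w)
    (hn : ¬G.Adj u w) : (cons h (cons h' nil)).IsShortest := by
  rintro (_ | ⟨h₁, _ | ⟨_, _⟩⟩)
  · exact absurd rfl hne
  · exact absurd h₁ hn
  · simp

end Walk

open Walk

variable {n : ℕ} {G : SimpleGraph (Fin n)}

theorem isClosed_iff_lt_iff_lt :
    G.IsClosed ↔ ∀ ⦃u v w : Fin n⦄, G.Adj u v → G.Adj v w → u ≠ w → ¬G.Adj u w →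
      (u < v ↔ v < w) := by
  constructor
  · intro hG u v w huv hvw hne hn
    rcases huv.ne.lt_or_gt with huv' | huv' <;> rcases hvw.ne.lt_or_gt with hvw' | hvw'
    · exact iff_of_true huv' hvw'
    · exact absurd ((hG huv hvw.symm huv' hvw').2 rfl hne) hn
    · exact absurd ((hG huv.symm hvw huv' hvw').1 rfl hne) hn
    · exact iff_of_false huv'.not_gt hvw'.not_gt
  · intro H i j k l hij hkl hij' hkl'
    constructor
    · rintro rfl hjl
      by_contra hn
      exact hij'.not_gt ((H hij.symm hkl hjl hn).mpr hkl')
    · rintro rfl hik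
      by_contra hn
      exact hkl'.not_gt ((H hij hkl.symm hik hn).mp hij')

theorem Walk.isDirected_iff {u w : Fin n} (p : G.Walk u w) :
    p.IsDirected ↔ p.support.IsChain (· < ·) ∨ p.support.IsChain (· > ·) :=
  Iff.rfl

theorem Walk.isDirected_nil {u : Fin n} : (nil : G.Walk u u).IsDirected :=
  Or.inl (List.isChain_singleton u)

theorem Walk.isDirected_cons_nil {u v : Fin n} (h : G.Adj u v) :
    (cons h nil).IsDirected :=
  h.ne.lt_or_gt.imp List.isChain_pair.mpr List.isChain_pair.mpr

theorem Walk.isDirected_cons_cons_iff {u v x w : Fin n} (h : G.Adj u v) (h' : G.Adj v x)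
    (p : G.Walk x w) :
    (cons h (cons h' p)).IsDirected ↔ ((u < v ↔ v < x) ∧ (cons h' p).IsDirected) := by
  rw [isDirected_iff, isDirected_iff, support_cons, support_cons, ← p.cons_tail_support]
  simp only [List.isChain_cons_cons]
  constructor
  · rintro (⟨huv, hvx, hc⟩ | ⟨huv, hvx, hc⟩)
    · exact ⟨iff_of_true huv hvx, .inl ⟨hvx, hc⟩⟩
    · exact ⟨iff_of_false huv.not_gt hvx.not_gt, .inr ⟨hvx, hc⟩⟩
  · rintro ⟨hmono, ⟨hvx, hc⟩ | ⟨hvx, hc⟩⟩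
    · exact .inl ⟨hmono.mpr hvx, hvx, hc⟩
    · refine .inr ⟨?_, hvx, hc⟩
      exact h.ne.symm.lt_of_le (not_lt.mp fun huv => hvx.not_gt (hmono.mp huv))

theorem IsClosed.isDirected_of_isShortest (hG : G.IsClosed) {u w : Fin n} :
    ∀ p : G.Walk u w, p.IsShortest → p.IsDirected
  | .nil, _ => isDirected_nil
  | .cons h .nil, _ => isDirected_cons_nil h
  | .cons h (.cons h' p), hp =>
    (isDirected_cons_cons_iff h h' p).mpr
      ⟨isClosed_iff_lt_iff_lt.mp hG h h' hp.ne_of_cons_cons hp.not_adj_of_cons_cons,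
        hG.isDirected_of_isShortest _ hp.of_cons⟩

end SimpleGraph

open SimpleGraph Walk

/-- `G` is closed with respect to the given labeling if and only if for any two distinct
vertices `i`, `j`, every path of shortest length from `i` to `j` is directed in the
associated orientation `G*`. -/
theorem closed_iff_shortest_paths_directed {n : ℕ} (G : SimpleGraph (Fin n)) :
    G.IsClosed ↔
      ∀ (i j : Fin n), i ≠ j → ∀ p : G.Walk i j, p.IsPath →
        (∀ q : G.Walk i j, p.length ≤ q.length) → p.IsDirected := by
  refine ⟨fun hG _ _ _ p _ hp => hG.isDirected_of_isShortest p hp, fun H => ?_⟩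
  refine isClosed_iff_lt_iff_lt.mpr fun u v w huv hvw hne hn => ?_
  have hpath : (cons huv (cons hvw nil)).IsPath := by
    simp [cons_isPath_iff, huv.ne, hvw.ne, hne]
  exact ((isDirected_cons_cons_iff huv hvw nil).mp
    (H u w hne _ hpath (isShortest_cons_cons_nil huv hvw hne hn))).1
end

section
/- Let G be a connected simple graph on [n] which is closed with respect to the given labeling. Then {i, i+1} is an edge of G for every i with 1 ≤ i ≤ n-1. -/
/-!
Say `u` *ascends* to `v` if there is a path `u = x₀ < x₁ < ⋯ < xₖ = v` in `G`, `k ≥ 1`. In a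
closed graph, the relation "equal, or one ascends to the other" is preserved by a step along an
edge: if `u ⋯ x < v` ascends to `v` and `w < v` is another neighbour of `v`, closedness makes `x`
and `w` adjacent, and we recurse on the shorter path to `x`. Hence any two vertices of a connected
closed graph are comparable in this sense, and an ascending path from `i` to `i + 1` can only be
the edge itself.
-/

namespace SimpleGraph

section Ascends

variable {V : Type*} {G : SimpleGraph V} {u v w : V}

def Ascends [LT V] (G : SimpleGraph V) : V → V → Prop :=
  Relation.TransGen fun a b => G.Adj a b ∧ a < b

theorem Ascends.tail [LT V] (h : G.Ascends u v) (hvw : G.Adj v w) (hlt : v < w) :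
    G.Ascends u w :=
  Relation.TransGen.tail h ⟨hvw, hlt⟩

theorem Ascends.head [LT V] (h : G.Ascends v w) (huv : G.Adj u v) (hlt : u < v) :
    G.Ascends u w :=
  Relation.TransGen.head ⟨huv, hlt⟩ h

theorem Ascends.lt [Preorder V] (h : G.Ascends u v) : u < v := by
  induction h with
  | single hab => exact hab.2
  | tail _ hbc ih => exact ih.trans hbc.2

theorem Ascends.adj_of_covBy [Preorder V] (h : G.Ascends u v) (huv : u ⋖ v) : G.Adj u v := by
  obtain ⟨b, ⟨hub, hlt⟩, hbv⟩ := Relation.TransGen.head'_iff.mp h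
  rcases Relation.reflTransGen_iff_eq_or_transGen.mp hbv with rfl | hbv
  · exact hub
  · exact absurd (Ascends.lt hbv) (huv.2 hlt)

theorem Adj.ascends_or_ascends [LinearOrder V] (h : G.Adj u v) :
    G.Ascends u v ∨ G.Ascends v u :=
  (lt_or_gt_of_ne h.ne).imp (fun hlt => .single ⟨h, hlt⟩) (fun hgt => .single ⟨h.symm, hgt⟩)

end Ascends

namespace IsClosed

variable {n : ℕ} {G : SimpleGraph (Fin n)} {u v w : Fin n} (hG : G.IsClosed)
include hG

theorem ascends_or_of_ascends_of_adj_of_lt (huv : G.Ascends u v) (hvw : G.Adj v w)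
    (hwv : w < v) : u = w ∨ G.Ascends u w ∨ G.Ascends w u := by
  induction huv generalizing w with
  | single hab =>
    rcases eq_or_ne u w with rfl | huw
    · exact .inl rfl
    · exact .inr ((hG hab.1 hvw.symm hab.2 hwv).2 rfl huw).ascends_or_ascends
  | @tail x v hux hxv ih =>
    rcases eq_or_ne x w with rfl | hxw
    · exact .inr (.inl hux)
    have hxw' : G.Adj x w := (hG hxv.1 hvw.symm hxv.2 hwv).2 rfl hxw
    rcases lt_or_gt_of_ne hxw with hlt | hgt
    · exact .inr (.inl (Ascends.tail hux hxw' hlt))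
    · exact ih hxw' hgt

theorem ascends_or_of_ascends_of_adj_of_gt (hvu : G.Ascends v u) (hvw : G.Adj v w)
    (hvw' : v < w) : u = w ∨ G.Ascends u w ∨ G.Ascends w u := by
  induction hvu using Relation.TransGen.head_induction_on generalizing w with
  | single hab =>
    rcases eq_or_ne u w with rfl | huw
    · exact .inl rfl
    · exact .inr ((hG hab.1 hvw hab.2 hvw').1 rfl huw).ascends_or_ascends
  | @head v x hvx hxu ih =>
    rcases eq_or_ne x w with rfl | hxw
    · exact .inr (.inr hxu)
    have hxw' : G.Adj x w := (hG hvx.1 hvw hvx.2 hvw').1 rfl hxw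
    rcases lt_or_gt_of_ne hxw with hlt | hgt
    · exact ih hxw' hlt
    · exact .inr (.inr (Ascends.head hxu hxw'.symm hgt))

theorem eq_or_ascends_or_ascends_of_reachable (h : G.Reachable u v) :
    u = v ∨ G.Ascends u v ∨ G.Ascends v u := by
  rw [reachable_iff_reflTransGen] at h
  induction h with
  | refl => exact .inl rfl
  | @tail v w _ hvw ih =>
    rcases ih with rfl | huv | hvu
    · exact .inr hvw.ascends_or_ascends
    · rcases lt_or_gt_of_ne hvw.ne with hlt | hgt
      · exact .inr (.inl (huv.tail hvw hlt))
      · exact hG.ascends_or_of_ascends_of_adj_of_lt huv hvw hgt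
    · rcases lt_or_gt_of_ne hvw.ne with hlt | hgt
      · exact hG.ascends_or_of_ascends_of_adj_of_gt hvu hvw hlt
      · exact .inr (.inr (hvu.head hvw.symm hgt))

end IsClosed

end SimpleGraph

/-- If `G` is a connected graph on `[n]` which is closed with respect to the given
labeling, then `{i, i+1}` is an edge of `G` for every `1 ≤ i ≤ n-1`. -/
theorem adj_succ_of_closed_connected {n : ℕ} (G : SimpleGraph (Fin n))
    (hconn : G.Connected) (hG : G.IsClosed) :
    ∀ i : ℕ, (h : i + 1 < n) → G.Adj ⟨i, Nat.lt_of_succ_lt h⟩ ⟨i + 1, h⟩ := by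
  intro i h
  rcases hG.eq_or_ascends_or_ascends_of_reachable
    (hconn.preconnected ⟨i, Nat.lt_of_succ_lt h⟩ ⟨i + 1, h⟩) with heq | hup | hdown
  · simp [Fin.ext_iff] at heq
  · exact hup.adj_of_covBy (Fin.covBy_iff.mpr (Order.covBy_add_one i))
  · exact absurd hdown.lt (by simp [Fin.lt_def])
end

section
/- Let K be a field, S = K[x_1,...,x_n,y_1,...,y_n], and G a simple graph on [n]. The binomial edge ideal J_G = (x_i y_j − x_j y_i : {i,j} ∈ E(G), i<j) is a prime ideal if and only if every connected component of G restricted to its non-isolated vertices is a complete graph (equivalently, adjacency is transitive on G: if {i,j} and {j,k} are edges with i ≠ k, then {i,k} is an edge). -/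
/-!
If `i ~ j ~ k` but `i ≁ k`, then `x_j f_{ik} = x_i f_{jk} + x_k f_{ij}` lies in `J_G` while
neither factor does (evaluate at suitable points), so `J_G` is not prime.

Conversely, if adjacency is transitive, the connected components are cliques and `J_G` is the
kernel of the monomial map `x_i ↦ s_i t_C`, `y_i ↦ s_i` (`C` the component of `i`) into a
polynomial ring, hence prime. The kernel of a monomial map is spanned by the binomials
`x^e - x^e'` with `e`, `e'` in one fiber, and these lie in `J_G` by induction on `e`: once the
common part of `e` and `e'` is cancelled, `e'` is `e` with `x` and `y` exchanged, so some
component carries both an `x_i` and a `y_j` of `x^e`, and `x_i y_j - x_j y_i` is `± f_{ij}`.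
-/

open MvPolynomial

/-- The binomial `f_{ij} = x_i y_j - x_j y_i` in `K[x_1,…,x_n,y_1,…,y_n]`, where the
`x` variables are indexed by `Sum.inl` and the `y` variables by `Sum.inr`. -/
noncomputable def edgeBinomial (K : Type*) [Field K] {n : ℕ} (i j : Fin n) :
    MvPolynomial (Fin n ⊕ Fin n) K :=
  X (Sum.inl i) * X (Sum.inr j) - X (Sum.inl j) * X (Sum.inr i)

/-- The binomial edge ideal `J_G` of a simple graph `G` on `[n]`. -/
noncomputable def binomialEdgeIdeal (K : Type*) [Field K] {n : ℕ}
    (G : SimpleGraph (Fin n)) : Ideal (MvPolynomial (Fin n ⊕ Fin n) K) :=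
  Ideal.span {p | ∃ i j : Fin n, G.Adj i j ∧ i < j ∧ p = edgeBinomial K i j}

namespace AddMonoidAlgebra

variable {k M N : Type*} [Ring k] [AddMonoid M] [AddMonoid N]

theorem ker_mapDomainRingHom_le (f : M →+ N) {I : Ideal (AddMonoidAlgebra k M)}
    (h : ∀ a b, f a = f b → single a 1 - single b 1 ∈ I) :
    RingHom.ker (mapDomainRingHom k f) ≤ I := by
  -- `g ∘ f` picks a representative of each fiber of `f`
  set g := Function.invFun f
  have hg (a : M) : f (g (f a)) = f a := Function.invFun_eq ⟨a, rfl⟩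
  have key (p : AddMonoidAlgebra k M) : p - mapDomain g (mapDomain f p) ∈ I := by
    induction p using induction_linear with
    | zero => simp
    | add p q hp hq => simpa [mapDomain_add, add_sub_add_comm] using add_mem hp hq
    | single a c =>
      rw [mapDomain_single, mapDomain_single]
      have : single a c - single (g (f a)) c = single 0 c * (single a 1 - single (g (f a)) 1) := by
        rw [mul_sub, single_mul_single, single_mul_single, zero_add, zero_add, mul_one]
      rw [this]
      exact I.mul_mem_left _ (h _ _ (hg a).symm)
  intro p hp
  have hfp : mapDomain f p = 0 := hp
  simpa [hfp] using key p

end AddMonoidAlgebra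

theorem MvPolynomial.monomial_add_sub_monomial_add_mem {σ R : Type*} [CommRing R]
    {I : Ideal (MvPolynomial σ R)} {d d' s s' : σ →₀ ℕ}
    (hd : monomial d (1 : R) - monomial d' 1 ∈ I) (hs : monomial s (1 : R) - monomial s' 1 ∈ I) :
    monomial (d + s) (1 : R) - monomial (d' + s') 1 ∈ I := by
  rw [← Ideal.Quotient.eq] at hd hs ⊢
  simpa only [← map_mul, monomial_mul, one_mul] using congr($hd * $hs)

namespace SimpleGraph

variable {V : Type*} {G : SimpleGraph V}

theorem Reachable.eq_or_adj (ht : ∀ i j k, G.Adj i j → G.Adj j k → i ≠ k → G.Adj i k)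
    {i j : V} (h : G.Reachable i j) : i = j ∨ G.Adj i j := by
  obtain ⟨p⟩ := h
  induction p with
  | nil => exact Or.inl rfl
  | @cons u v w huv _ ih =>
    rcases ih with rfl | hvw
    · exact Or.inr huv
    · by_cases huw : u = w
      · exact Or.inl huw
      · exact Or.inr (ht u v w huv hvw huw)

end SimpleGraph

section BinomialEdgeIdeal

variable {K : Type*} [Field K] {n : ℕ} (G : SimpleGraph (Fin n))

theorem edgeBinomial_swap (i j : Fin n) : edgeBinomial K j i = -edgeBinomial K i j := by
  unfold edgeBinomial; ring

theorem binomialEdgeIdeal_le_iff {I : Ideal (MvPolynomial (Fin n ⊕ Fin n) K)} :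
    binomialEdgeIdeal K G ≤ I ↔ ∀ i j, G.Adj i j → edgeBinomial K i j ∈ I := by
  refine ⟨fun hle i j hij => ?_, fun h => ?_⟩
  · rcases lt_trichotomy i j with hlt | rfl | hgt
    · exact hle (Ideal.subset_span ⟨i, j, hij, hlt, rfl⟩)
    · exact absurd hij G.irrefl
    · rw [edgeBinomial_swap]
      exact neg_mem (hle (Ideal.subset_span ⟨j, i, hij.symm, hgt, rfl⟩))
  · rw [binomialEdgeIdeal, Ideal.span_le]
    rintro _ ⟨i, j, hij, -, rfl⟩
    exact h i j hij

theorem edgeBinomial_mem_binomialEdgeIdeal {i j : Fin n} (hij : G.Adj i j) :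
    edgeBinomial K i j ∈ binomialEdgeIdeal K G :=
  (binomialEdgeIdeal_le_iff G).1 le_rfl i j hij

theorem X_inl_notMem_binomialEdgeIdeal (j : Fin n) :
    (X (.inl j) : MvPolynomial (Fin n ⊕ Fin n) K) ∉ binomialEdgeIdeal K G := by
  have hle : binomialEdgeIdeal K G ≤ RingHom.ker (aeval (Sum.elim 1 0 : Fin n ⊕ Fin n → K)) :=
    (binomialEdgeIdeal_le_iff G).2 fun i j _ => by simp [edgeBinomial]
  exact fun hj => by simpa using hle hj

theorem edgeBinomial_notMem_binomialEdgeIdeal {i k : Fin n} (hik : i ≠ k) (hnadj : ¬G.Adj i k) :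
    edgeBinomial K i k ∉ binomialEdgeIdeal K G := by
  let w : Fin n ⊕ Fin n → K := Sum.elim (Pi.single i 1) (Pi.single k 1)
  have hle : binomialEdgeIdeal K G ≤ RingHom.ker (aeval w) := by
    refine (binomialEdgeIdeal_le_iff G).2 fun a b hab => ?_
    simp only [RingHom.mem_ker, edgeBinomial, w, map_sub, map_mul, aeval_X, Sum.elim_inl,
      Sum.elim_inr, Pi.single_apply]
    split_ifs <;> simp_all [G.adj_comm]
  exact fun hmem => by simpa [w, edgeBinomial, hik, hik.symm] using hle hmem

theorem adj_of_isPrime_binomialEdgeIdeal (hJ : (binomialEdgeIdeal K G).IsPrime) {i j k : Fin n}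
    (hij : G.Adj i j) (hjk : G.Adj j k) (hik : i ≠ k) : G.Adj i k := by
  by_contra hnadj
  have hmem : X (.inl j) * edgeBinomial K i k ∈ binomialEdgeIdeal K G := by
    have : X (.inl j) * edgeBinomial K i k =
        X (.inl i) * edgeBinomial K j k + X (.inl k) * edgeBinomial K i j := by
      unfold edgeBinomial; ring
    rw [this]
    exact add_mem (Ideal.mul_mem_left _ _ (edgeBinomial_mem_binomialEdgeIdeal G hjk))
      (Ideal.mul_mem_left _ _ (edgeBinomial_mem_binomialEdgeIdeal G hij))
  rcases hJ.mem_or_mem hmem with h | h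
  · exact X_inl_notMem_binomialEdgeIdeal G j h
  · exact edgeBinomial_notMem_binomialEdgeIdeal G hik hnadj h

end BinomialEdgeIdeal

section ExponentMap

variable {V : Type*}

noncomputable def exponentXY (i j : V) : V ⊕ V →₀ ℕ :=
  Finsupp.single (.inl i) 1 + Finsupp.single (.inr j) 1

theorem exponentXY_ne_zero (i j : V) : exponentXY i j ≠ 0 := fun h => by
  simpa [exponentXY] using congr($h (.inl i))

theorem exponentXY_le_iff {i j : V} {e : V ⊕ V →₀ ℕ} :
    exponentXY i j ≤ e ↔ e (.inl i) ≠ 0 ∧ e (.inr j) ≠ 0 := by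
  classical
  simp only [exponentXY, Finsupp.le_def, ← Nat.one_le_iff_ne_zero]
  refine ⟨fun h => ⟨by simpa using h (.inl i), by simpa using h (.inr j)⟩, fun h v => ?_⟩
  rcases v with v | v <;> simp [Finsupp.single_apply] <;> split_ifs <;> grind

open scoped Classical

variable [Fintype V] (G : SimpleGraph V)

/-- The exponent map of the monomial substitution `x_i ↦ s_i t_C`, `y_i ↦ s_i`, where `C` is the
connected component of `i`; the `s` variables are indexed by `Sum.inl`, the `t` by `Sum.inr`. -/
noncomputable def exponentMap : (V ⊕ V →₀ ℕ) →+ (V ⊕ G.ConnectedComponent →₀ ℕ) where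
  toFun e := Finsupp.equivFunOnFinite.symm <| Sum.elim (fun i => e (.inl i) + e (.inr i))
    fun C => ∑ j with G.connectedComponentMk j = C, e (.inl j)
  map_zero' := by ext (_ | _) <;> simp
  map_add' e e' := by
    ext (_ | _) <;> simp [Finset.sum_add_distrib, add_add_add_comm]

variable {G}

@[simp]
theorem exponentMap_apply_inl (e : V ⊕ V →₀ ℕ) (i : V) :
    exponentMap G e (.inl i) = e (.inl i) + e (.inr i) := by
  simp [exponentMap]

@[simp]
theorem exponentMap_apply_inr (e : V ⊕ V →₀ ℕ) (C : G.ConnectedComponent) :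
    exponentMap G e (.inr C) = ∑ j with G.connectedComponentMk j = C, e (.inl j) := by
  simp [exponentMap]

theorem eq_zero_of_exponentMap_eq_zero {e : V ⊕ V →₀ ℕ} (he : exponentMap G e = 0) : e = 0 := by
  have h (i : V) : e (.inl i) + e (.inr i) = 0 := by simpa using congr($he (.inl i))
  ext (i | i) <;> simp <;> have := h i <;> omega

theorem exponentMap_exponentXY {i j : V} (h : G.Reachable i j) :
    exponentMap G (exponentXY i j) = exponentMap G (exponentXY j i) := by
  ext (k | C)
  · simp [exponentXY, Finsupp.single_apply, add_comm]
  · simp [exponentXY, Finsupp.single_apply, SimpleGraph.ConnectedComponent.sound h]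

theorem exists_exponentXY_le_of_inf_eq_zero {e e' : V ⊕ V →₀ ℕ}
    (h : exponentMap G e = exponentMap G e') (hdisj : e ⊓ e' = 0) (he : e ≠ 0) :
    ∃ i j, G.Reachable i j ∧ exponentXY i j ≤ e ∧ exponentXY j i ≤ e' := by
  -- disjoint exponents in one fiber differ by exchanging `x` and `y`
  have hswap (k : V) : e' (.inl k) = e (.inr k) ∧ e' (.inr k) = e (.inl k) := by
    have h₁ := congr($h (.inl k))
    have h₂ := congr($hdisj (.inl k))
    have h₃ := congr($hdisj (.inr k))
    simp only [exponentMap_apply_inl, Finsupp.inf_apply, Finsupp.coe_zero, Pi.zero_apply]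
      at h₁ h₂ h₃
    omega
  obtain ⟨k, hk⟩ : ∃ k, e (.inl k) + e (.inr k) ≠ 0 := by
    by_contra! hall
    exact he (by ext (k | k) <;> simp <;> have := hall k <;> omega)
  set s := ({j | G.Reachable j k} : Finset V)
  have hsum : ∑ j ∈ s, e (.inl j) = ∑ j ∈ s, e (.inr j) := by
    simpa [hswap] using congr($h (.inr (G.connectedComponentMk k)))
  have hpos : ∑ j ∈ s, e (.inl j) + ∑ j ∈ s, e (.inr j) ≠ 0 := by
    rw [← Finset.sum_add_distrib]
    exact fun h0 => hk (Finset.sum_eq_zero_iff.1 h0 k (by simp [s]))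
  obtain ⟨i, hi, hi'⟩ := Finset.exists_ne_zero_of_sum_ne_zero (by omega : ∑ j ∈ s, e (.inl j) ≠ 0)
  obtain ⟨j, hj, hj'⟩ := Finset.exists_ne_zero_of_sum_ne_zero (by omega : ∑ j ∈ s, e (.inr j) ≠ 0)
  simp only [s, Finset.mem_filter, Finset.mem_univ, true_and] at hi hj
  refine ⟨i, j, hi.trans hj.symm,
    exponentXY_le_iff.2 ⟨hi', hj'⟩, exponentXY_le_iff.2 ⟨?_, ?_⟩⟩
  · rwa [(hswap j).1]
  · rwa [(hswap i).2]

end ExponentMap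

section Toric

variable {K : Type*} [Field K] {n : ℕ} {G : SimpleGraph (Fin n)}

theorem edgeBinomial_eq_monomial_sub (i j : Fin n) :
    edgeBinomial K i j = monomial (exponentXY i j) 1 - monomial (exponentXY j i) 1 := by
  simp only [edgeBinomial, exponentXY, X, monomial_mul, one_mul]

theorem monomial_sub_monomial_mem_binomialEdgeIdeal
    (ht : ∀ i j k : Fin n, G.Adj i j → G.Adj j k → i ≠ k → G.Adj i k)
    (e e' : Fin n ⊕ Fin n →₀ ℕ) (h : exponentMap G e = exponentMap G e') :
    monomial e (1 : K) - monomial e' 1 ∈ binomialEdgeIdeal K G := by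
  induction e using WellFoundedLT.induction generalizing e' with
  | _ e ih =>
  have peel (d d' s s' : Fin n ⊕ Fin n →₀ ℕ) (hd : e = d + s) (hd' : e' = d' + s') (hs : s ≠ 0)
      (hss' : exponentMap G s = exponentMap G s')
      (hmem : monomial s (1 : K) - monomial s' 1 ∈ binomialEdgeIdeal K G) :
      monomial e (1 : K) - monomial e' 1 ∈ binomialEdgeIdeal K G := by
    subst hd hd'
    refine monomial_add_sub_monomial_add_mem
      (ih d (lt_add_of_pos_right d (pos_iff_ne_zero.2 hs)) d' ?_) hmem
    simpa [hss'] using h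
  by_cases hdisj : e ⊓ e' = 0
  · by_cases he : e = 0
    · obtain rfl : e' = 0 := eq_zero_of_exponentMap_eq_zero (by rw [← h, he, map_zero])
      simp [he]
    obtain ⟨i, j, hij, hle, hle'⟩ := exists_exponentXY_le_of_inf_eq_zero h hdisj he
    refine peel _ _ _ _ (tsub_add_cancel_of_le hle).symm (tsub_add_cancel_of_le hle').symm
      (exponentXY_ne_zero i j) (exponentMap_exponentXY hij) ?_
    rw [← edgeBinomial_eq_monomial_sub]
    rcases hij.eq_or_adj ht with rfl | hadj
    · simp [edgeBinomial]
    · exact edgeBinomial_mem_binomialEdgeIdeal G hadj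
  · exact peel _ _ _ _ (tsub_add_cancel_of_le inf_le_left).symm
      (tsub_add_cancel_of_le inf_le_right).symm hdisj rfl (by simp)

variable (K G) in
theorem binomialEdgeIdeal_le_ker_exponentMap :
    binomialEdgeIdeal K G ≤ RingHom.ker (AddMonoidAlgebra.mapDomainRingHom K (exponentMap G)) :=
  (binomialEdgeIdeal_le_iff G).2 fun i j hij => by
    rw [RingHom.mem_ker, edgeBinomial_eq_monomial_sub, map_sub, sub_eq_zero]
    simp [← single_eq_monomial, exponentMap_exponentXY hij.reachable]

theorem binomialEdgeIdeal_eq_ker_exponentMap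
    (ht : ∀ i j k : Fin n, G.Adj i j → G.Adj j k → i ≠ k → G.Adj i k) :
    binomialEdgeIdeal K G = RingHom.ker (AddMonoidAlgebra.mapDomainRingHom K (exponentMap G)) :=
  le_antisymm (binomialEdgeIdeal_le_ker_exponentMap K G) <|
    AddMonoidAlgebra.ker_mapDomainRingHom_le _ (monomial_sub_monomial_mem_binomialEdgeIdeal ht)

theorem isPrime_binomialEdgeIdeal
    (ht : ∀ i j k : Fin n, G.Adj i j → G.Adj j k → i ≠ k → G.Adj i k) :
    (binomialEdgeIdeal K G).IsPrime := by
  rw [binomialEdgeIdeal_eq_ker_exponentMap ht]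
  exact RingHom.ker_isPrime _

end Toric

/-- `J_G` is a prime ideal if and only if adjacency is transitive on `G`, i.e. every
connected component of `G` (restricted to its non-isolated vertices) is complete. -/
theorem binomialEdgeIdeal_isPrime_iff (K : Type*) [Field K] {n : ℕ}
    (G : SimpleGraph (Fin n)) :
    (binomialEdgeIdeal K G).IsPrime ↔
      ∀ i j k : Fin n, G.Adj i j → G.Adj j k → i ≠ k → G.Adj i k :=
  ⟨fun hJ _ _ _ => adj_of_isPrime_binomialEdgeIdeal G hJ, isPrime_binomialEdgeIdeal⟩
end
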